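/- Outer description of the ordered odd parity polytope: For r in N^k, the convex hull of all tuples (x^(1),...,x^(k)) of ordered binary vectors x^(i) in {0,1}^{r_i} whose total number of ones is odd equals the set of points (x^(1),...,x^(k)) with each x^(i) in P_ord^{r_i} satisfying, for every F subset of [k] with |F| even, the inequality sum_{i in [k]\F} f(x^(i)) + sum_{i in F} (1 - f(x^(i))) >= 1. -/

import Mathlib

/-!
On ordered binary vectors `altSum` is the parity of the number of ones, so every vertex satisfies
the parity inequalities, and these cut out a convex set.

Conversely, `P_ord^m` (`orderedCube m`) is the order simplex spanned by the ordered binary vectors,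
and `altSum` is `1` on those with an odd number of ones and `0` on the others. Hence each `x i`
splits as `a i • o i + (1 - a i) • z i` with `a i = altSum (x i)` and `o i` (resp. `z i`) a convex
combination of odd (resp. even) ordered binary vectors. The inequalities say that `a` lies in
Jeroslow's outer description (`parityCuts`) of the odd parity polytope, so by separation `a` is a
convex combination of indicators of odd sets `Q`; replacing each indicator by the tuple equal to
`o i` on `Q` and to `z i` off `Q` writes `x` as a convex combination of points of convex hulls of
vertex sets.
-/

/-- The alternating sum `f(y) = ∑_j (-1)^{j-1} y_j` (0-indexed here). -/
def altSum {m : ℕ} (y : Fin m → ℝ) : ℝ := ∑ j : Fin m, (-1 : ℝ) ^ (j : ℕ) * y j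

open Finset

theorem exists_split_of_mem_convexHull_union {E : Type*} [AddCommGroup E] [Module ℝ E]
    {s t : Set E} {ℓ : E →ₗ[ℝ] ℝ} {x : E} (hs : ∀ v ∈ s, ℓ v = 1)
    (ht : ∀ v ∈ t, ℓ v = 0) (hx : x ∈ convexHull ℝ (s ∪ t)) :
    ℓ x ∈ Set.Icc 0 1 ∧ ∃ o z, (0 < ℓ x → o ∈ convexHull ℝ s) ∧
      (ℓ x < 1 → z ∈ convexHull ℝ t) ∧ x = ℓ x • o + (1 - ℓ x) • z := by
  have hs' : convexHull ℝ s ⊆ ℓ ⁻¹' {1} :=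
    convexHull_min hs ((convex_singleton 1).linear_preimage ℓ)
  have ht' : convexHull ℝ t ⊆ ℓ ⁻¹' {0} :=
    convexHull_min ht ((convex_singleton 0).linear_preimage ℓ)
  rcases s.eq_empty_or_nonempty with rfl | hs₀
  · rw [Set.empty_union] at hx
    rw [ht' hx]
    exact ⟨by simp, x, x, by simp, fun _ => hx, by simp⟩
  rcases t.eq_empty_or_nonempty with rfl | ht₀
  · rw [Set.union_empty] at hx
    rw [hs' hx]
    exact ⟨by simp, x, x, fun _ => hx, by simp, by simp⟩
  rw [convexHull_union hs₀ ht₀] at hx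
  obtain ⟨o, ho, z, hz, θ, μ, hθ, hμ, hθμ, rfl⟩ := mem_convexJoin.1 hx
  obtain rfl : μ = 1 - θ := by linarith
  have hℓo : ℓ o = 1 := hs' ho
  have hℓz : ℓ z = 0 := ht' hz
  rw [show ℓ (θ • o + (1 - θ) • z) = θ by simp [hℓo, hℓz]]
  exact ⟨⟨hθ, by linarith⟩, o, z, fun _ => ho, fun _ => hz, rfl⟩

theorem mem_convexHull_of_indicator_split {ι : Type*} [Finite ι] [DecidableEq ι]
    {E : ι → Type*} [∀ i, AddCommGroup (E i)] [∀ i, Module ℝ (E i)] {B : Set (Finset ι)}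
    {O Z : ∀ i, Set (E i)} {a : ι → ℝ} {o z x : ∀ i, E i}
    (ha : a ∈ convexHull ℝ ((fun Q : Finset ι => fun i => if i ∈ Q then (1 : ℝ) else 0) '' B))
    (ho : ∀ i, 0 < a i → o i ∈ convexHull ℝ (O i))
    (hz : ∀ i, a i < 1 → z i ∈ convexHull ℝ (Z i))
    (hx : ∀ i, x i = a i • o i + (1 - a i) • z i) :
    x ∈ convexHull ℝ (⋃ Q ∈ B, Set.univ.pi fun i => if i ∈ Q then O i else Z i) := by
  obtain ⟨κ, _, w, b, hw₀, hw₁, hb, hwa⟩ := mem_convexHull_iff_exists_fintype.1 ha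
  choose Q hQB hQ using hb
  have ha_in : ∀ i, a i = ∑ l ∈ univ.filter (i ∈ Q ·), w l := fun i => by
    simp [← hwa, ← hQ, sum_filter]
  have ha_out : ∀ i, 1 - a i = ∑ l ∈ univ.filter (i ∉ Q ·), w l := fun i => by
    rw [ha_in, ← hw₁, ← sum_filter_add_sum_filter_not univ (i ∈ Q ·) w]
    ring
  set y : κ → ∀ i, E i := fun l i => if i ∈ Q l then o i else z i
  have hxy : x = ∑ l, w l • y l := by
    funext i
    rw [hx i, ha_out, ha_in]
    simp only [Finset.sum_apply, Pi.smul_apply, y, smul_ite, sum_ite, sum_smul]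
  have hy : ∀ l, w l ≠ 0 → y l ∈ convexHull ℝ
      (⋃ Q ∈ B, Set.univ.pi fun i => if i ∈ Q then O i else Z i) := by
    intro l hl
    have hwl : 0 < w l := (hw₀ l).lt_of_ne' hl
    refine convexHull_mono (Set.subset_biUnion_of_mem (hQB l)) (mem_convexHull_pi fun i _ => ?_)
    by_cases hi : i ∈ Q l
    · have : w l ≤ a i :=
        ha_in i ▸ single_le_sum (fun l _ => hw₀ l) (by simpa using hi)
      simpa [y, hi] using ho i (by linarith)
    · have : w l ≤ 1 - a i :=
        ha_out i ▸ single_le_sum (fun l _ => hw₀ l) (by simpa using hi)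
      simpa [y, hi] using hz i (by linarith)
  rw [hxy, ← finsum_eq_sum_of_fintype]
  exact (convex_convexHull ℝ _).finsum_mem hw₀ (by rwa [finsum_eq_sum_of_fintype]) hy

def altSumLinear (m : ℕ) : (Fin m → ℝ) →ₗ[ℝ] ℝ where
  toFun := altSum
  map_add' y z := by simp only [altSum, Pi.add_apply, mul_add, sum_add_distrib]
  map_smul' c y := by
    simp only [altSum, Pi.smul_apply, smul_eq_mul, RingHom.id_apply, mul_sum, mul_left_comm]

@[simp]
theorem altSumLinear_apply {m : ℕ} (y : Fin m → ℝ) : altSumLinear m y = altSum y := rfl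

def orderedCube (m : ℕ) : Set (Fin m → ℝ) := {y | (∀ j, 0 ≤ y j ∧ y j ≤ 1) ∧ Antitone y}

def orderedBinary (m : ℕ) : Set (Fin m → ℝ) := {y | (∀ j, y j = 0 ∨ y j = 1) ∧ Antitone y}

def stepVec (m s : ℕ) : Fin m → ℝ := fun j => if (j : ℕ) < s then 1 else 0

section StepVec

variable {m s : ℕ}

theorem stepVec_mem_orderedBinary : stepVec m s ∈ orderedBinary m := by
  refine ⟨fun j => by unfold stepVec; split_ifs <;> simp, fun j j' hj => ?_⟩
  unfold stepVec
  have := Fin.le_iff_val_le_val.1 hj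
  split_ifs <;> first | omega | norm_num

theorem ncard_stepVec_eq_one (hs : s ≤ m) : {j | stepVec m s j = 1}.ncard = s := by
  have : {j | stepVec m s j = 1} = Set.range (Fin.castLE hs) := by
    ext j
    simp only [stepVec, Set.mem_ofPred_eq, ite_eq_left_iff, zero_ne_one, imp_false, not_not,
      Set.mem_range]
    exact ⟨fun h => ⟨⟨j, h⟩, rfl⟩, by rintro ⟨j, rfl⟩; exact j.isLt⟩
  rw [this, Set.ncard_range_of_injective (Fin.castLE_injective hs), Nat.card_eq_fintype_card,
    Fintype.card_fin]

theorem altSum_stepVec (hs : s ≤ m) : altSum (stepVec m s) = if Odd s then 1 else 0 := by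
  have : altSum (stepVec m s) = ∑ j ∈ range s, (-1 : ℝ) ^ j := by
    unfold altSum stepVec
    simp only [mul_ite, mul_one, mul_zero]
    rw [Fin.sum_univ_eq_sum_range (fun j => if j < s then (-1 : ℝ) ^ j else 0), ← sum_filter]
    congr 1
    ext j
    simp only [mem_filter, mem_range]
    omega
  rw [this, neg_one_geom_sum]
  rcases Nat.even_or_odd s with h | h
  · simp [h, Nat.not_odd_iff_even.2 h]
  · simp [h, Nat.not_even_iff_odd.2 h]

end StepVec

theorem exists_eq_stepVec {m : ℕ} {y : Fin m → ℝ} (hy : y ∈ orderedBinary m) :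
    ∃ s ≤ m, y = stepVec m s := by
  obtain ⟨h01, hanti⟩ := hy
  set T := univ.filter fun j => y j = 1
  have hone : ∀ j, y j = 1 → (j : ℕ) < #T := fun j hj => by
    have : Iic j ⊆ T := fun i hi => by
      have := hanti (mem_Iic.1 hi)
      simpa [T] using (h01 i).resolve_left (by intro h; linarith)
    simpa using card_le_card this
  have hzero : ∀ j, y j = 0 → #T ≤ j := fun j hj => by
    have : T ⊆ Iio j := fun i hi => mem_Iio.2 <| lt_of_not_ge fun hji => by
      have := hanti hji
      simp only [T, mem_filter] at hi
      linarith [hi.2]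
    simpa using card_le_card this
  refine ⟨#T, (card_le_univ T).trans (by simp), funext fun j => ?_⟩
  rcases h01 j with h | h
  · simp [stepVec, h, (hzero j h).not_gt]
  · simp [stepVec, h, hone j h]

theorem altSum_of_mem_orderedBinary {m : ℕ} {y : Fin m → ℝ} (hy : y ∈ orderedBinary m) :
    altSum y = if Odd {j | y j = 1}.ncard then 1 else 0 := by
  obtain ⟨s, hs, rfl⟩ := exists_eq_stepVec hy
  rw [altSum_stepVec hs, ncard_stepVec_eq_one hs]

theorem orderedBinary_subset_orderedCube {m : ℕ} : orderedBinary m ⊆ orderedCube m :=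
  fun y ⟨h01, hanti⟩ => ⟨fun j => by rcases h01 j with h | h <;> simp [h], hanti⟩

theorem convex_orderedCube (m : ℕ) : Convex ℝ (orderedCube m) := by
  rintro y ⟨hy, hyanti⟩ z ⟨hz, hzanti⟩ p q hp hq hpq
  refine ⟨fun j => ⟨?_, ?_⟩, fun j j' hj => ?_⟩ <;>
    simp only [Pi.add_apply, Pi.smul_apply, smul_eq_mul]
  · nlinarith [hy j, hz j]
  · nlinarith [hy j, hz j]
  · nlinarith [hyanti hj, hzanti hj]

/-- Consecutive differences of this sequence are the barycentric coordinates of `y` in the order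
simplex spanned by the vectors `stepVec m s`. -/
def padOne {m : ℕ} (y : Fin m → ℝ) : ℕ → ℝ
  | 0 => 1
  | s + 1 => if h : s < m then y ⟨s, h⟩ else 0

theorem padOne_antitone {m : ℕ} {y : Fin m → ℝ} (hy : y ∈ orderedCube m) :
    Antitone (padOne y) := by
  refine antitone_nat_of_succ_le fun s => ?_
  rcases s with _ | s
  · simp only [padOne]; split_ifs
    · exact (hy.1 _).2
    · norm_num
  · simp only [padOne]
    split_ifs with h h'
    · exact hy.2 (Fin.mk_le_mk.2 s.le_succ)
    · omega
    · exact (hy.1 _).1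
    · rfl

theorem sum_padOne_sub_smul_stepVec {m : ℕ} (y : Fin m → ℝ) :
    ∑ s ∈ range (m + 1), (padOne y s - padOne y (s + 1)) • stepVec m s = y := by
  have htop : padOne y (m + 1) = 0 := by simp [padOne]
  funext j
  simp only [Finset.sum_apply, Pi.smul_apply, smul_eq_mul, stepVec, mul_ite, mul_one, mul_zero]
  have hIco : (range (m + 1)).filter (fun s => (j : ℕ) < s) = Ico ((j : ℕ) + 1) (m + 1) := by
    ext s
    simp only [mem_filter, mem_range, mem_Ico]
    omega
  rw [← sum_filter, hIco, sum_Ico_eq_sub _ (by omega), sum_range_sub', sum_range_sub', htop]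
  simp [padOne]

theorem orderedCube_subset_convexHull {m : ℕ} :
    orderedCube m ⊆ convexHull ℝ (orderedBinary m) := by
  intro y hy
  rw [← sum_padOne_sub_smul_stepVec y]
  refine (convex_convexHull ℝ _).sum_mem
    (fun s _ => sub_nonneg.2 (padOne_antitone hy s.le_succ)) ?_
    fun s _ => subset_convexHull ℝ _ stepVec_mem_orderedBinary
  rw [sum_range_sub']
  simp [padOne]

section Parity

variable {ι : Type*} [Fintype ι] [DecidableEq ι]

variable (ι) in
def parityCuts : Set (ι → ℝ) :=
  {a | ∀ F : Finset ι, Even F.card → 1 ≤ ∑ i ∈ Fᶜ, a i + ∑ i ∈ F, (1 - a i)}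

variable (ι) in
def oddIndicators : Set (ι → ℝ) :=
  (fun Q : Finset ι => fun i => if i ∈ Q then 1 else 0) '' {Q | Odd Q.card}

theorem convex_parityCuts : Convex ℝ (parityCuts ι) := by
  intro a ha b hb p q hp hq hpq F hF
  have hsub : ∀ i, 1 - (p * a i + q * b i) = p * (1 - a i) + q * (1 - b i) := fun i => by
    linear_combination -hpq
  simp only [Pi.add_apply, Pi.smul_apply, smul_eq_mul, hsub, sum_add_distrib, ← mul_sum]
  nlinarith [ha F hF, hb F hF]

theorem oddIndicators_subset_parityCuts : oddIndicators ι ⊆ parityCuts ι := by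
  rintro _ ⟨Q, hQ, rfl⟩ F hF
  obtain ⟨i, hi⟩ : ∃ i, ¬(i ∈ Q ↔ i ∈ F) := by
    by_contra! h
    exact Nat.not_even_iff_odd.2 hQ (ext h ▸ hF)
  have hQ₀ : ∀ j ∈ Fᶜ, (0 : ℝ) ≤ if j ∈ Q then 1 else 0 := fun j _ => by
    split_ifs <;> norm_num
  have hQ₁ : ∀ j ∈ F, (0 : ℝ) ≤ 1 - if j ∈ Q then 1 else 0 := fun j _ => by
    split_ifs <;> norm_num
  by_cases hiF : i ∈ F
  · have := single_le_sum hQ₁ hiF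
    simp only [hiF, iff_true] at hi
    simp only [hi, if_false, sub_zero] at this
    linarith [sum_nonneg hQ₀]
  · have := single_le_sum hQ₀ (mem_compl.2 hiF)
    simp only [hiF, iff_false, not_not] at hi
    simp only [hi, if_true] at this
    linarith [sum_nonneg hQ₁]

/-- `P = {c > 0}` works when `#P` is odd; otherwise flip the coordinate with the smallest `|c i|`,
whose cost is covered by the inequality for `F = P`. -/
theorem exists_odd_card_sum_mul_le_sum {a : ι → ℝ} (h₀ : ∀ i, 0 ≤ a i) (h₁ : ∀ i, a i ≤ 1)
    (ha : a ∈ parityCuts ι) (c : ι → ℝ) :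
    ∃ Q : Finset ι, Odd Q.card ∧ ∑ i, a i * c i ≤ ∑ i ∈ Q, c i := by
  set P := univ.filter fun i => 0 < c i
  have key : ∀ μ, (∀ i, μ ≤ |c i|) →
      ∑ i, a i * c i + μ * (∑ i ∈ Pᶜ, a i + ∑ i ∈ P, (1 - a i)) ≤ ∑ i ∈ P, c i := by
    intro μ hμ
    have hP : ∀ i ∈ P, a i * c i + μ * (1 - a i) ≤ c i := fun i hi => by
      have hci : 0 < c i := (mem_filter.1 hi).2
      nlinarith [abs_of_pos hci ▸ hμ i, h₁ i]
    have hPc : ∀ i ∈ Pᶜ, a i * c i + μ * a i ≤ 0 := fun i hi => by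
      have hci : c i ≤ 0 := by simpa [P] using hi
      nlinarith [abs_of_nonpos hci ▸ hμ i, h₀ i]
    calc ∑ i, a i * c i + μ * (∑ i ∈ Pᶜ, a i + ∑ i ∈ P, (1 - a i))
        = ∑ i ∈ P, (a i * c i + μ * (1 - a i)) + ∑ i ∈ Pᶜ, (a i * c i + μ * a i) := by
          rw [← sum_add_sum_compl P, mul_add, mul_sum, mul_sum, sum_add_distrib, sum_add_distrib]
          ring
      _ ≤ ∑ i ∈ P, c i + 0 := add_le_add (sum_le_sum hP) (sum_nonpos hPc)
      _ = ∑ i ∈ P, c i := add_zero _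
  rcases Nat.even_or_odd P.card with hPe | hPo
  · have hcut := ha P hPe
    have : Nonempty ι := by
      by_contra! h
      norm_num [eq_empty_of_isEmpty P] at hcut
    obtain ⟨m, -, hm⟩ := exists_min_image univ (fun i => |c i|) univ_nonempty
    have hle := key |c m| fun i => hm i (mem_univ i)
    have : |c m| ≤ |c m| * (∑ i ∈ Pᶜ, a i + ∑ i ∈ P, (1 - a i)) :=
      le_mul_of_one_le_right (abs_nonneg _) hcut
    by_cases hmP : m ∈ P
    · refine ⟨P.erase m, ?_, ?_⟩
      · rw [card_erase_of_mem hmP]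
        exact Nat.Even.sub_odd (card_pos.2 ⟨m, hmP⟩) hPe odd_one
      · rw [sum_erase_eq_sub hmP, ← abs_of_pos (mem_filter.1 hmP).2]
        linarith
    · refine ⟨insert m P, by rw [card_insert_of_notMem hmP]; exact hPe.add_one, ?_⟩
      have hcm : c m ≤ 0 := by simpa [P] using hmP
      rw [sum_insert hmP, ← neg_neg (c m), ← abs_of_nonpos hcm]
      linarith
  · exact ⟨P, hPo, by simpa using key 0 fun i => abs_nonneg _⟩

theorem mem_convexHull_oddIndicators {a : ι → ℝ} (h₀ : ∀ i, 0 ≤ a i) (h₁ : ∀ i, a i ≤ 1)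
    (ha : a ∈ parityCuts ι) : a ∈ convexHull ℝ (oddIndicators ι) := by
  by_contra hnot
  obtain ⟨f, u, hfV, hfa⟩ := geometric_hahn_banach_closed_point (convex_convexHull ℝ _)
    (((Set.toFinite _).image _).isClosed_convexHull (𝕜 := ℝ)) hnot
  set c : ι → ℝ := fun i => f fun j => if i = j then 1 else 0
  have hf : ∀ b, f b = ∑ i, b i * c i := (f : (ι → ℝ) →ₗ[ℝ] ℝ).pi_apply_eq_sum_univ
  obtain ⟨Q, hQ, hle⟩ := exists_odd_card_sum_mul_le_sum h₀ h₁ ha c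
  have hQu := hfV _ (subset_convexHull ℝ _ ⟨Q, hQ, rfl⟩)
  rw [hf] at hQu hfa
  simp only [ite_mul, one_mul, zero_mul, sum_ite_mem, univ_inter] at hQu
  linarith

end Parity

section OrderedParity

variable {ι : Type*} [Fintype ι] [DecidableEq ι] (r : ι → ℕ)

def orderedOddVertices : Set (∀ i, Fin (r i) → ℝ) :=
  {x | (∀ i j, x i j = 0 ∨ x i j = 1) ∧ (∀ i, Antitone (x i)) ∧
    Odd (∑ i, {j | x i j = 1}.ncard)}

def orderedParityOuter : Set (∀ i, Fin (r i) → ℝ) :=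
  {x | (∀ i, x i ∈ orderedCube (r i)) ∧ (fun i => altSum (x i)) ∈ parityCuts ι}

theorem convex_orderedParityOuter : Convex ℝ (orderedParityOuter r) := by
  have hcube : Convex ℝ {x : ∀ i, Fin (r i) → ℝ | ∀ i, x i ∈ orderedCube (r i)} := by
    simpa [Set.pi] using convex_pi (s := Set.univ) fun i _ => convex_orderedCube (r i)
  exact hcube.inter (convex_parityCuts.linear_preimage
    (LinearMap.pi fun i => (altSumLinear (r i)).comp (LinearMap.proj i)))

theorem orderedOddVertices_subset_orderedParityOuter :
    orderedOddVertices r ⊆ orderedParityOuter r := by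
  rintro x ⟨h01, hanti, hodd⟩
  have hbin : ∀ i, x i ∈ orderedBinary (r i) := fun i => ⟨h01 i, hanti i⟩
  refine ⟨fun i => orderedBinary_subset_orderedCube (hbin i),
    oddIndicators_subset_parityCuts ⟨univ.filter fun i => Odd {j | x i j = 1}.ncard,
      (odd_sum_iff_odd_card_odd _).1 hodd, ?_⟩⟩
  funext i
  simp [altSum_of_mem_orderedBinary (hbin i)]

theorem orderedParityOuter_subset_convexHull :
    orderedParityOuter r ⊆ convexHull ℝ (orderedOddVertices r) := by
  rintro x ⟨hcube, hcuts⟩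
  set oddOnes : ∀ i, Set (Fin (r i) → ℝ) := fun i => {y | Odd {j | y j = 1}.ncard}
  have hsplit := fun i => exists_split_of_mem_convexHull_union (ℓ := altSumLinear (r i))
    (s := orderedBinary (r i) ∩ oddOnes i) (t := orderedBinary (r i) \ oddOnes i)
    (fun y ⟨hy, hodd⟩ => by
      rw [altSumLinear_apply, altSum_of_mem_orderedBinary hy]
      exact if_pos hodd)
    (fun y ⟨hy, heven⟩ => by
      rw [altSumLinear_apply, altSum_of_mem_orderedBinary hy]
      exact if_neg heven)
    (by rw [Set.inter_union_sdiff]; exact orderedCube_subset_convexHull (hcube i))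
  choose hbounds o z ho hz hx using hsplit
  have ha := mem_convexHull_oddIndicators (fun i => (hbounds i).1) (fun i => (hbounds i).2) hcuts
  refine convexHull_mono ?_ (mem_convexHull_of_indicator_split ha ho hz hx)
  simp only [Set.subset_def, Set.mem_iUnion, Set.mem_univ_pi]
  rintro y ⟨Q, hQ, hy⟩
  have hyQ : ∀ i, y i ∈ orderedBinary (r i) ∧ (Odd {j | y i j = 1}.ncard ↔ i ∈ Q) :=
    fun i => by by_cases hi : i ∈ Q <;> simpa [hi, oddOnes] using hy i
  have hfilter : univ.filter (fun i => Odd {j | y i j = 1}.ncard) = Q := by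
    ext i
    simp [(hyQ i).2]
  exact ⟨fun i => (hyQ i).1.1, fun i => (hyQ i).1.2,
    (odd_sum_iff_odd_card_odd _).2 (hfilter ▸ hQ)⟩

end OrderedParity

/-- outer description of the ordered odd parity polytope. -/
theorem stmt8 (k : ℕ) (r : Fin k → ℕ) :
    convexHull ℝ
      {x : ∀ i, Fin (r i) → ℝ |
        (∀ i j, x i j = 0 ∨ x i j = 1) ∧
        (∀ i, ∀ j j' : Fin (r i), j ≤ j' → x i j' ≤ x i j) ∧
        Odd (∑ i, {j : Fin (r i) | x i j = 1}.ncard)} =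
      {x : ∀ i, Fin (r i) → ℝ |
        (∀ i, (∀ j, 0 ≤ x i j ∧ x i j ≤ 1) ∧
          ∀ j j' : Fin (r i), j ≤ j' → x i j' ≤ x i j) ∧
        ∀ F : Finset (Fin k), Even F.card →
          1 ≤ ∑ i ∈ Fᶜ, altSum (x i) + ∑ i ∈ F, (1 - altSum (x i))} :=
  (convexHull_min (orderedOddVertices_subset_orderedParityOuter r)
    (convex_orderedParityOuter r)).antisymm (orderedParityOuter_subset_convexHull r)
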